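/- arXiv:2311.12496 — 9 statements merged into one kernel-verified Lean document; each statement's English description precedes it below -/
import Mathlib

section
/- If α_ex : W → E is a global minimizer of the ex-ante worst-case functional F, then for every message w ∈ W with μ₀(C(w)) > 0 the point α_ex(w) lies on the line segment joining α_pool and α_{C(w)}, i.e. α_ex(w) ∈ segment(α_pool, α_{C(w)}). -/
/-!
Fix a word `w` and let `K` be the segment from the pooling action to the conditional mean of
`C w`. Integrating against a measure with mean `b`, the cost of an action `a` exceeds that of `v`
by the mass times `‖a - b‖² - ‖v - b‖²`. If `αex w ∉ K`, its metric projection `v` onto `K` is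
strictly closer to both endpoints, so replacing `αex w` by `v` lowers the loss of every prior
`G ∈ 𝒢` by at least the same `δ > 0` (the cell term gains strictly, the `G w`-weighted term does
not lose), hence lowers the worst case `F` by `δ`, contradicting minimality.
-/

open MeasureTheory Set

section Projection

variable {V : Type*} [NormedAddCommGroup V] [InnerProductSpace ℝ V]

theorem exists_mem_forall_norm_sub_lt_of_notMem {K : Set V} (hne : K.Nonempty)
    (hcomplete : IsComplete K) (hconvex : Convex ℝ K) {a : V} (ha : a ∉ K) :
    ∃ v ∈ K, ∀ b ∈ K, ‖v - b‖ < ‖a - b‖ := by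
  obtain ⟨v, hvK, hv⟩ := exists_norm_eq_iInf_of_complete_convex hne hcomplete hconvex a
  have hobtuse := (norm_eq_iInf_iff_real_inner_le_zero hconvex hvK).1 hv
  have hav : 0 < ‖a - v‖ := norm_sub_pos_iff.2 fun h => ha (h ▸ hvK)
  refine ⟨v, hvK, fun b hb => ?_⟩
  have hpythagoras : ‖a - b‖ ^ 2 = ‖a - v‖ ^ 2 - 2 * inner ℝ (a - v) (b - v) + ‖v - b‖ ^ 2 := by
    rw [← norm_neg (v - b), neg_sub, ← norm_sub_sq_real]
    congr 2
    abel
  have := hobtuse b hb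
  have := pow_pos hav 2
  exact lt_of_pow_lt_pow_left₀ 2 (norm_nonneg _) (by linarith)

end Projection

section SecondMoment

variable {E : Type*} [NormedAddCommGroup E] [MeasurableSpace E] [BorelSpace E]
  [SecondCountableTopology E] {ν : Measure E}

theorem memLp_two_id (h2 : Integrable (fun t => ‖t‖ ^ 2) ν) : MemLp id 2 ν :=
  (memLp_two_iff_integrable_sq_norm aestronglyMeasurable_id).2 h2

variable [IsFiniteMeasure ν]

theorem integrable_norm_sub_sq (h2 : Integrable (fun t => ‖t‖ ^ 2) ν) (a : E) :
    Integrable (fun t => ‖t - a‖ ^ 2) ν :=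
  ((memLp_two_id h2).sub (memLp_const a)).integrable_norm_pow two_ne_zero

variable [InnerProductSpace ℝ E] [CompleteSpace E]

theorem integral_norm_sub_sq_sub_integral_norm_sub_sq
    (h2 : Integrable (fun t => ‖t‖ ^ 2) ν) {b : E} (hb : ∫ t, t ∂ν = ν.real univ • b) (a v : E) :
    ∫ t, ‖t - a‖ ^ 2 ∂ν - ∫ t, ‖t - v‖ ^ 2 ∂ν = ν.real univ * (‖a - b‖ ^ 2 - ‖v - b‖ ^ 2) := by
  have hid : Integrable (fun t : E => t) ν := (memLp_two_id h2).integrable one_le_two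
  have hpointwise : ∀ t : E,
      ‖t - a‖ ^ 2 - ‖t - v‖ ^ 2 = (‖a‖ ^ 2 - ‖v‖ ^ 2) - 2 * inner ℝ (a - v) t := by
    intro t
    rw [norm_sub_sq_real, norm_sub_sq_real, inner_sub_left, real_inner_comm a, real_inner_comm v]
    ring
  rw [← integral_sub (integrable_norm_sub_sq h2 a) (integrable_norm_sub_sq h2 v)]
  simp_rw [hpointwise]
  rw [integral_sub (integrable_const _) ((hid.const_inner (a - v)).const_mul 2), integral_const,
    integral_const_mul, integral_inner hid, hb, inner_smul_right, norm_sub_sq_real a,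
    norm_sub_sq_real v, smul_eq_mul, inner_sub_left]
  ring

end SecondMoment

section ExAnte

variable {E : Type*} [NormedAddCommGroup E] [MeasurableSpace E] {W : Type*} [Fintype W]

noncomputable def exAnteLoss (μ₀ : Measure E) (C : W → Set E) (p : ℝ) (α : W → E) (G : W → ℝ) : ℝ :=
  ∑ w, ((1 - p) * ∫ t in C w, ‖t - α w‖ ^ 2 ∂μ₀ + p * G w * ∫ t, ‖t - α w‖ ^ 2 ∂μ₀)

theorem continuous_exAnteLoss (μ₀ : Measure E) (C : W → Set E) (p : ℝ) (α : W → E) :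
    Continuous (exAnteLoss μ₀ C p α) := by
  unfold exAnteLoss
  fun_prop

theorem exAnteLoss_sub_exAnteLoss_update [DecidableEq W] (μ₀ : Measure E) (C : W → Set E)
    (p : ℝ) (α : W → E) (w : W) (v : E) (G : W → ℝ) :
    exAnteLoss μ₀ C p α G - exAnteLoss μ₀ C p (Function.update α w v) G
      = (1 - p) * (∫ t in C w, ‖t - α w‖ ^ 2 ∂μ₀ - ∫ t in C w, ‖t - v‖ ^ 2 ∂μ₀)
        + p * G w * (∫ t, ‖t - α w‖ ^ 2 ∂μ₀ - ∫ t, ‖t - v‖ ^ 2 ∂μ₀) := by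
  rw [exAnteLoss, exAnteLoss, ← Finset.sum_sub_distrib,
    Finset.sum_eq_single_of_mem w (Finset.mem_univ w) fun u _ hu => by
      rw [Function.update_of_ne hu, sub_self], Function.update_self]
  ring

end ExAnte

theorem csSup_image_add_le_csSup_image {ι : Type*} {s : Set ι} (hs : s.Nonempty) {f g : ι → ℝ}
    (hg : BddAbove (g '' s)) {δ : ℝ} (h : ∀ i ∈ s, f i + δ ≤ g i) :
    sSup (f '' s) + δ ≤ sSup (g '' s) := by
  rw [← le_sub_iff_add_le]
  refine csSup_le (hs.image f) ?_
  rintro _ ⟨i, hi, rfl⟩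
  exact le_sub_iff_add_le.2 ((h i hi).trans (le_csSup hg ⟨i, hi, rfl⟩))

theorem ex_ante_optimizer_on_segment_general
    {L : ℕ} (μ₀ : Measure (EuclideanSpace ℝ (Fin L)))
    [IsProbabilityMeasure μ₀]
    (hL2 : Integrable (fun t => ‖t‖ ^ 2) μ₀)
    {W : Type} [Fintype W]
    (C : W → Set (EuclideanSpace ℝ (Fin L)))
    (p : ℝ) (hp : p ∈ Set.Ioo (0 : ℝ) 1)
    (𝒢 : Set (W → ℝ)) (h𝒢ne : 𝒢.Nonempty) (h𝒢cpt : IsCompact 𝒢)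
    (h𝒢simplex : ∀ G ∈ 𝒢, (∀ w, 0 ≤ G w) ∧ (∑ w, G w) = 1)
    (αpool : EuclideanSpace ℝ (Fin L)) (hαpool : αpool = ∫ t, t ∂μ₀)
    (αcell : W → EuclideanSpace ℝ (Fin L))
    (hαcell : ∀ w, 0 < μ₀ (C w) →
      αcell w = ((μ₀ (C w)).toReal)⁻¹ • ∫ t in C w, t ∂μ₀)
    (F : (W → EuclideanSpace ℝ (Fin L)) → ℝ)
    (hF : ∀ α, F α = sSup ((fun G => ∑ w,
      ((1 - p) * ∫ t in C w, ‖t - α w‖ ^ 2 ∂μ₀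
        + p * G w * ∫ t, ‖t - α w‖ ^ 2 ∂μ₀)) '' 𝒢))
    (αex : W → EuclideanSpace ℝ (Fin L))
    (hmin : ∀ α, F αex ≤ F α) :
    ∀ w, 0 < μ₀ (C w) → αex w ∈ segment ℝ αpool (αcell w) := by
  classical
  intro w hw
  by_contra hnot
  obtain ⟨v, -, hcloser⟩ := exists_mem_forall_norm_sub_lt_of_notMem
    ⟨αpool, left_mem_segment ℝ _ _⟩
    (convexHull_pair (𝕜 := ℝ) αpool (αcell w) ▸
      ((toFinite _).isCompact_convexHull ℝ).isComplete)
    (convex_segment _ _) hnot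
  have hmass : 0 < μ₀.real (C w) := ENNReal.toReal_pos hw.ne' (measure_ne_top μ₀ _)
  have hcell_mean : ∫ t, t ∂μ₀.restrict (C w) = (μ₀.restrict (C w)).real univ • αcell w := by
    rw [measureReal_restrict_apply_univ, hαcell w hw]
    exact (smul_inv_smul₀ hmass.ne' _).symm
  have hpool_mean : ∫ t, t ∂μ₀ = μ₀.real univ • αpool := by
    rw [probReal_univ, one_smul, hαpool]
  set δ := (1 - p) * (μ₀.real (C w) * (‖αex w - αcell w‖ ^ 2 - ‖v - αcell w‖ ^ 2))
  have hδ : 0 < δ := by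
    have := hcloser _ (right_mem_segment ℝ _ _)
    have : 0 < 1 - p := sub_pos.2 hp.2
    have : ‖v - αcell w‖ ^ 2 < ‖αex w - αcell w‖ ^ 2 := by gcongr
    positivity
  have hgain : ∀ G ∈ 𝒢, exAnteLoss μ₀ C p (Function.update αex w v) G + δ
      ≤ exAnteLoss μ₀ C p αex G := by
    intro G hG
    rw [← le_sub_iff_add_le', exAnteLoss_sub_exAnteLoss_update,
      integral_norm_sub_sq_sub_integral_norm_sub_sq hL2.restrict hcell_mean,
      integral_norm_sub_sq_sub_integral_norm_sub_sq hL2 hpool_mean,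
      measureReal_restrict_apply_univ, probReal_univ, le_add_iff_nonneg_right]
    have := hcloser _ (left_mem_segment ℝ _ _)
    have : ‖v - αpool‖ ^ 2 ≤ ‖αex w - αpool‖ ^ 2 := by gcongr
    have := (h𝒢simplex G hG).1 w
    have := hp.1
    positivity
  have hworst := csSup_image_add_le_csSup_image h𝒢ne
    (h𝒢cpt.image (continuous_exAnteLoss μ₀ C p αex)).bddAbove hgain
  have hF' : ∀ α, F α = sSup (exAnteLoss μ₀ C p α '' 𝒢) := hF
  linarith [hmin (Function.update αex w v), hF' αex, hF' (Function.update αex w v)]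

/-- Any global minimizer of the ex-ante worst-case functional replies to
each positive-mass word with an action on the line segment between the pooling action
and the conditional mean of the word's cell. -/
theorem ex_ante_optimizer_on_segment
    {L : ℕ} (μ₀ : Measure (EuclideanSpace ℝ (Fin L)))
    [IsProbabilityMeasure μ₀]
    (hL2 : Integrable (fun t => ‖t‖ ^ 2) μ₀)
    {W : Type} [Fintype W] [Nonempty W]
    (C : W → Set (EuclideanSpace ℝ (Fin L)))
    (hCmeas : ∀ w, MeasurableSet (C w))
    (hCdisj : Pairwise (Function.onFun Disjoint C))
    (hCcover : μ₀ (⋃ w, C w) = 1)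
    (p : ℝ) (hp : p ∈ Set.Ioo (0 : ℝ) 1)
    (𝒢 : Set (W → ℝ)) (h𝒢ne : 𝒢.Nonempty) (h𝒢cpt : IsCompact 𝒢)
    (h𝒢simplex : ∀ G ∈ 𝒢, (∀ w, 0 ≤ G w) ∧ (∑ w, G w) = 1)
    (αpool : EuclideanSpace ℝ (Fin L)) (hαpool : αpool = ∫ t, t ∂μ₀)
    (αcell : W → EuclideanSpace ℝ (Fin L))
    (hαcell : ∀ w, 0 < μ₀ (C w) →
      αcell w = ((μ₀ (C w)).toReal)⁻¹ • ∫ t in C w, t ∂μ₀)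
    (F : (W → EuclideanSpace ℝ (Fin L)) → ℝ)
    (hF : ∀ α, F α = sSup ((fun G => ∑ w,
      ((1 - p) * ∫ t in C w, ‖t - α w‖ ^ 2 ∂μ₀
        + p * G w * ∫ t, ‖t - α w‖ ^ 2 ∂μ₀)) '' 𝒢))
    (αex : W → EuclideanSpace ℝ (Fin L))
    (hmin : ∀ α, F αex ≤ F α) :
    ∀ w, 0 < μ₀ (C w) → αex w ∈ segment ℝ αpool (αcell w) :=
  ex_ante_optimizer_on_segment_general μ₀ hL2 C p hp 𝒢 h𝒢ne h𝒢cpt h𝒢simplex αpool hαpool αcell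
    hαcell F hF αex hmin
end

section
/- Let C ⊆ E be measurable with μ₀(C) > 0 and let 0 ≤ κ̲ ≤ κ̄ ≤ 1. If (2κ̄ − 1)·‖α_C − α_pool‖² ≤ Tr_{μ₀} − Tr_{μ₀,C}, then the point β = (1−κ̄)·α_C + κ̄·α_pool is a global minimizer over s ∈ E of the interim worst-case functional U(s) = max_{κ ∈ [κ̲,κ̄]} [(1−κ)·E_{μ₀,C}[‖t−s‖²] + κ·∫_E ‖t−s‖² dμ₀]. -/
/-!
The loss `(1 - κ) E_C‖t - s‖² + κ E‖t - s‖²` is affine in `κ`, and by the bias–variance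
decomposition its two coefficients are `Tr_C + ‖s - α_C‖²` and `Tr + ‖s - α_pool‖²`. At `s = β`
these distances are `κ̄ d` and `(1 - κ̄) d` with `d = ‖α_C - α_pool‖`, so the regularity condition
says exactly that the pooled coefficient dominates there: the worst case at `β` is `κ = κ̄`.
Finally `β` minimises the `κ̄`-weighted loss, because
`(1 - κ)‖u‖² + κ‖v‖² = ‖(1 - κ)u + κv‖² + (1 - κ)κ‖u - v‖²`, and that loss at any `s` is at
most `U s`.
-/

open MeasureTheory ProbabilityTheory Set

section ConvexCombination

variable {E : Type*} [NormedAddCommGroup E] [InnerProductSpace ℝ E]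

theorem norm_convexComb_sub_left (κ : ℝ) (a b : E) :
    ‖(1 - κ) • a + κ • b - a‖ = |κ| * ‖a - b‖ := by
  simpa [dist_eq_norm, AffineMap.lineMap_apply_module] using dist_lineMap_left a b κ

theorem norm_convexComb_sub_right (κ : ℝ) (a b : E) :
    ‖(1 - κ) • a + κ • b - b‖ = |1 - κ| * ‖a - b‖ := by
  simpa [dist_eq_norm, AffineMap.lineMap_apply_module] using dist_lineMap_right a b κ

theorem weighted_norm_sq_eq (κ : ℝ) (u v : E) :
    (1 - κ) * ‖u‖ ^ 2 + κ * ‖v‖ ^ 2 = ‖(1 - κ) • u + κ • v‖ ^ 2 + (1 - κ) * κ * ‖u - v‖ ^ 2 := by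
  rw [norm_add_sq_real, norm_sub_sq_real, real_inner_smul_left, real_inner_smul_right,
    norm_smul, norm_smul]
  simp only [Real.norm_eq_abs, mul_pow, sq_abs]
  ring

theorem weighted_norm_sub_sq_convexComb_le (κ : ℝ) (a b s : E) :
    (1 - κ) * ‖(1 - κ) • a + κ • b - a‖ ^ 2 + κ * ‖(1 - κ) • a + κ • b - b‖ ^ 2
      ≤ (1 - κ) * ‖s - a‖ ^ 2 + κ * ‖s - b‖ ^ 2 := by
  set x := (1 - κ) • a + κ • b
  have hx : (1 - κ) • (x - a) + κ • (x - b) = 0 := by simp only [x]; module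
  have hdiff : (x - a) - (x - b) = (s - a) - (s - b) := by abel
  rw [weighted_norm_sq_eq, weighted_norm_sq_eq κ (s - a), hx, hdiff, norm_zero]
  nlinarith [sq_nonneg ‖(1 - κ) • (s - a) + κ • (s - b)‖]

end ConvexCombination

theorem integral_cond {Ω G : Type*} [MeasurableSpace Ω] [NormedAddCommGroup G] [NormedSpace ℝ G]
    (μ : Measure Ω) (s : Set Ω) (f : Ω → G) :
    ∫ x, f x ∂μ[|s] = (μ s).toReal⁻¹ • ∫ x in s, f x ∂μ := by
  rw [ProbabilityTheory.cond, integral_smul_measure, ENNReal.toReal_inv]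

theorem integral_norm_sub_sq_eq_add {E : Type*} [NormedAddCommGroup E] [InnerProductSpace ℝ E]
    [CompleteSpace E] [MeasurableSpace E] {ν : Measure E} [IsProbabilityMeasure ν]
    (h : MemLp (fun t => t) 2 ν) (s : E) :
    ∫ t, ‖t - s‖ ^ 2 ∂ν = ∫ t, ‖t - ∫ u, u ∂ν‖ ^ 2 ∂ν + ‖s - ∫ u, u ∂ν‖ ^ 2 := by
  set α := ∫ u, u ∂ν
  have hcentered : Integrable (fun t => t - α) ν := (h.integrable one_le_two).sub (integrable_const α)
  have hmean : ∫ t, (t - α) ∂ν = 0 := by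
    rw [integral_sub (h.integrable one_le_two) (integrable_const α), integral_const, probReal_univ,
      one_smul, sub_self]
  have hsq : Integrable (fun t => ‖t - α‖ ^ 2) ν :=
    (h.sub (memLp_const α)).integrable_norm_pow two_ne_zero
  have hcross : Integrable (fun t => 2 * inner ℝ (α - s) (t - α)) ν :=
    (hcentered.const_inner (α - s)).const_mul 2
  calc ∫ t, ‖t - s‖ ^ 2 ∂ν
      = ∫ t, (‖t - α‖ ^ 2 + 2 * inner ℝ (α - s) (t - α) + ‖α - s‖ ^ 2) ∂ν := by
        congr 1 with t
        rw [real_inner_comm, ← norm_add_sq_real, sub_add_sub_cancel]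
    _ = ∫ t, ‖t - α‖ ^ 2 ∂ν + 2 * inner ℝ (α - s) (∫ t, (t - α) ∂ν) + ‖α - s‖ ^ 2 := by
        rw [integral_add (f := fun t => ‖t - α‖ ^ 2 + 2 * inner ℝ (α - s) (t - α)) (hsq.add hcross)
          (integrable_const _), integral_add hsq hcross,
          integral_const, integral_const_mul, integral_inner hcentered]
        simp
    _ = ∫ t, ‖t - α‖ ^ 2 ∂ν + ‖s - α‖ ^ 2 := by
        rw [hmean, inner_zero_right, mul_zero, add_zero, norm_sub_rev]

section Mixture

variable {lo hi : ℝ}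

theorem csSup_convexComb_image_Icc {a b : ℝ} (hab : a ≤ b) (hlo : lo ≤ hi) :
    sSup ((fun κ => (1 - κ) * a + κ * b) '' Icc lo hi) = (1 - hi) * a + hi * b := by
  have hmono : Monotone fun κ : ℝ => (1 - κ) * a + κ * b := fun x y hxy => by nlinarith
  exact ((hmono.monotoneOn _).map_isGreatest (isGreatest_Icc hlo)).csSup_eq

theorem convexComb_le_csSup_image_Icc (a b : ℝ) (hlo : lo ≤ hi) :
    (1 - hi) * a + hi * b ≤ sSup ((fun κ => (1 - κ) * a + κ * b) '' Icc lo hi) :=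
  ContinuousOn.le_sSup_image_Icc (f := fun κ => (1 - κ) * a + κ * b) (by fun_prop) ⟨hlo, le_rfl⟩

end Mixture

theorem regular_word_interim_minimizer_general
    {L : ℕ} (μ₀ : Measure (EuclideanSpace ℝ (Fin L)))
    [IsProbabilityMeasure μ₀]
    (hL2 : Integrable (fun t => ‖t‖ ^ 2) μ₀)
    (C : Set (EuclideanSpace ℝ (Fin L)))
    (hC : 0 < μ₀ C)
    (κlo κhi : ℝ) (hlo : κlo ≤ κhi)
    (αC αpool : EuclideanSpace ℝ (Fin L))
    (hαC : αC = ((μ₀ C).toReal)⁻¹ • ∫ t in C, t ∂μ₀)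
    (hαpool : αpool = ∫ t, t ∂μ₀)
    (Trμ TrC : ℝ)
    (hTrμ : Trμ = ∫ t, ‖t - αpool‖ ^ 2 ∂μ₀)
    (hTrC : TrC = ((μ₀ C).toReal)⁻¹ * ∫ t in C, ‖t - αC‖ ^ 2 ∂μ₀)
    (hreg : (2 * κhi - 1) * ‖αC - αpool‖ ^ 2 ≤ Trμ - TrC)
    (U : EuclideanSpace ℝ (Fin L) → ℝ)
    (hU : ∀ s, U s = sSup ((fun κ =>
      (1 - κ) * (((μ₀ C).toReal)⁻¹ * ∫ t in C, ‖t - s‖ ^ 2 ∂μ₀)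
        + κ * ∫ t, ‖t - s‖ ^ 2 ∂μ₀) '' Set.Icc κlo κhi))
    (β : EuclideanSpace ℝ (Fin L))
    (hβ : β = (1 - κhi) • αC + κhi • αpool) :
    ∀ s, U β ≤ U s := by
  have hμ₀ : MemLp (fun t => t) 2 μ₀ :=
    (memLp_two_iff_integrable_sq_norm aestronglyMeasurable_id).2 hL2
  have : IsProbabilityMeasure μ₀[|C] := cond_isProbabilityMeasure hC.ne'
  have hμ₀C : MemLp (fun t => t) 2 μ₀[|C] :=
    (hμ₀.restrict C).smul_measure (ENNReal.inv_ne_top.2 hC.ne')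
  have hpool (s) : ∫ t, ‖t - s‖ ^ 2 ∂μ₀ = Trμ + ‖s - αpool‖ ^ 2 := by
    rw [integral_norm_sub_sq_eq_add hμ₀, hTrμ, hαpool]
  have hcond (s) : ((μ₀ C).toReal)⁻¹ * ∫ t in C, ‖t - s‖ ^ 2 ∂μ₀ = TrC + ‖s - αC‖ ^ 2 := by
    have hαC' : αC = ∫ t, t ∂μ₀[|C] := by rw [hαC, integral_cond]
    rw [← smul_eq_mul, ← integral_cond, integral_norm_sub_sq_eq_add hμ₀C, hTrC, ← hαC',
      integral_cond, smul_eq_mul]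
  have hβ_le : TrC + ‖β - αC‖ ^ 2 ≤ Trμ + ‖β - αpool‖ ^ 2 := by
    rw [hβ, norm_convexComb_sub_left, norm_convexComb_sub_right, mul_pow, mul_pow, sq_abs, sq_abs]
    linear_combination hreg
  intro s
  simp only [hU, hcond, hpool]
  rw [csSup_convexComb_image_Icc hβ_le hlo]
  refine le_trans ?_ (convexComb_le_csSup_image_Icc _ _ hlo)
  have hmin := weighted_norm_sub_sq_convexComb_le κhi αC αpool s
  rw [← hβ] at hmin
  linarith

/-- If the regularity condition
`(2κ̄ − 1)·‖αC − αpool‖² ≤ Tr_{μ₀} − Tr_{μ₀,C}` holds, then the point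
`β = (1−κ̄)·αC + κ̄·αpool` globally minimizes the interim worst-case functional. -/
theorem regular_word_interim_minimizer
    {L : ℕ} (μ₀ : Measure (EuclideanSpace ℝ (Fin L)))
    [IsProbabilityMeasure μ₀]
    (hL2 : Integrable (fun t => ‖t‖ ^ 2) μ₀)
    (C : Set (EuclideanSpace ℝ (Fin L))) (hCmeas : MeasurableSet C)
    (hC : 0 < μ₀ C)
    (κlo κhi : ℝ) (h0 : 0 ≤ κlo) (hlo : κlo ≤ κhi) (hhi : κhi ≤ 1)
    (αC αpool : EuclideanSpace ℝ (Fin L))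
    (hαC : αC = ((μ₀ C).toReal)⁻¹ • ∫ t in C, t ∂μ₀)
    (hαpool : αpool = ∫ t, t ∂μ₀)
    (Trμ TrC : ℝ)
    (hTrμ : Trμ = ∫ t, ‖t - αpool‖ ^ 2 ∂μ₀)
    (hTrC : TrC = ((μ₀ C).toReal)⁻¹ * ∫ t in C, ‖t - αC‖ ^ 2 ∂μ₀)
    (hreg : (2 * κhi - 1) * ‖αC - αpool‖ ^ 2 ≤ Trμ - TrC)
    (U : EuclideanSpace ℝ (Fin L) → ℝ)
    (hU : ∀ s, U s = sSup ((fun κ =>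
      (1 - κ) * (((μ₀ C).toReal)⁻¹ * ∫ t in C, ‖t - s‖ ^ 2 ∂μ₀)
        + κ * ∫ t, ‖t - s‖ ^ 2 ∂μ₀) '' Set.Icc κlo κhi))
    (β : EuclideanSpace ℝ (Fin L))
    (hβ : β = (1 - κhi) • αC + κhi • αpool) :
    ∀ s, U β ≤ U s :=
  regular_word_interim_minimizer_general μ₀ hL2 C hC κlo κhi hlo αC αpool hαC hαpool Trμ TrC hTrμ
    hTrC hreg U hU β hβ
end

section
/- Let C ⊆ E be measurable with μ₀(C) > 0, let κ ∈ ℝ, and set β_κ = (1−κ)·α_C + κ·α_pool. Then E_{μ₀,C}[‖t−β_κ‖²] ≤ ∫_E ‖t−β_κ‖² dμ₀ holds if and only if (2κ − 1)·‖α_C − α_pool‖² ≤ Tr_{μ₀} − Tr_{μ₀,C}. -/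
/-!
Huygens' decomposition `∫ ‖t - b‖² dν = ∫ ‖t - m‖² dν + ‖m - b‖²`, for a probability measure `ν`
with barycentre `m`, applied to `μ₀` and to the conditional measure `μ₀[|C]`, writes both sides of
the inequality as a trace plus the squared distance from the barycentre to `β_κ`. Since `β_κ`
lies on the line through `α_C` and `α_pool`, these distances are `|κ| ‖α_C - α_pool‖` and
`|1 - κ| ‖α_C - α_pool‖`, and `κ² - (1 - κ)² = 2κ - 1`.
-/

open MeasureTheory ProbabilityTheory

section SquareIntegrable

variable {E : Type*} [NormedAddCommGroup E] [MeasurableSpace E] [BorelSpace E]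
  [SecondCountableTopology E] {ν : Measure E}

lemma memLp_two_id_of_integrable_norm_sq (h : Integrable (fun t : E => ‖t‖ ^ 2) ν) :
    MemLp id 2 ν :=
  (memLp_two_iff_integrable_sq_norm aestronglyMeasurable_id).2 h

lemma integrable_id_of_integrable_norm_sq [IsFiniteMeasure ν]
    (h : Integrable (fun t : E => ‖t‖ ^ 2) ν) : Integrable id ν :=
  (memLp_two_id_of_integrable_norm_sq h).integrable one_le_two

lemma integrable_norm_sub_sq_of_integrable_norm_sq [IsFiniteMeasure ν]
    (h : Integrable (fun t : E => ‖t‖ ^ 2) ν) (b : E) :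
    Integrable (fun t => ‖t - b‖ ^ 2) ν :=
  (memLp_two_iff_integrable_sq_norm (by fun_prop)).1
    ((memLp_two_id_of_integrable_norm_sq h).sub (memLp_const b))

end SquareIntegrable

lemma integral_norm_sub_sq_eq_integral_norm_sub_integral_sq_add_sq {E : Type*}
    [NormedAddCommGroup E] [InnerProductSpace ℝ E] [CompleteSpace E] [MeasurableSpace E]
    [BorelSpace E] [SecondCountableTopology E] {ν : Measure E} [IsProbabilityMeasure ν]
    (h : Integrable (fun t : E => ‖t‖ ^ 2) ν) (b : E) :
    ∫ t, ‖t - b‖ ^ 2 ∂ν = ∫ t, ‖t - ∫ s, s ∂ν‖ ^ 2 ∂ν + ‖(∫ s, s ∂ν) - b‖ ^ 2 := by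
  set m := ∫ s, s ∂ν
  have hid : Integrable (fun t : E => t) ν := integrable_id_of_integrable_norm_sq h
  have hcentered : Integrable (fun t => t - m) ν := hid.sub (integrable_const m)
  have hvar : Integrable (fun t => ‖t - m‖ ^ 2) ν :=
    integrable_norm_sub_sq_of_integrable_norm_sq h m
  have hcross : Integrable (fun t => 2 * inner ℝ (m - b) (t - m)) ν :=
    (hcentered.const_inner _).const_mul 2
  have hmean_zero : ∫ t, t - m ∂ν = 0 := by
    rw [integral_sub hid (integrable_const m), integral_const, probReal_univ, one_smul, sub_self]
  have hexpand (t : E) :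
      ‖t - b‖ ^ 2 = ‖t - m‖ ^ 2 + 2 * inner ℝ (m - b) (t - m) + ‖m - b‖ ^ 2 := by
    rw [real_inner_comm, ← norm_add_sq_real, sub_add_sub_cancel]
  have hsum : Integrable (fun t => ‖t - m‖ ^ 2 + 2 * inner ℝ (m - b) (t - m)) ν :=
    hvar.add hcross
  rw [integral_congr_ae (ae_of_all ν hexpand), integral_add hsum (integrable_const _),
    integral_add hvar hcross, integral_const_mul, integral_inner hcentered, hmean_zero,
    inner_zero_right, mul_zero, add_zero, integral_const, probReal_univ, one_smul]

lemma integral_cond_eq_inv_smul_setIntegral {Ω F : Type*} [MeasurableSpace Ω]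
    [NormedAddCommGroup F] [NormedSpace ℝ F] (μ : Measure Ω) (s : Set Ω) (f : Ω → F) :
    ∫ x, f x ∂μ[|s] = (μ s).toReal⁻¹ • ∫ x in s, f x ∂μ := by
  rw [ProbabilityTheory.cond, integral_smul_measure, ENNReal.toReal_inv]

theorem regularity_criterion_iff_general
    {L : ℕ} (μ₀ : Measure (EuclideanSpace ℝ (Fin L)))
    [IsProbabilityMeasure μ₀]
    (hL2 : Integrable (fun t => ‖t‖ ^ 2) μ₀)
    (C : Set (EuclideanSpace ℝ (Fin L)))
    (hC : 0 < μ₀ C)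
    (κ : ℝ)
    (αC αpool : EuclideanSpace ℝ (Fin L))
    (hαC : αC = ((μ₀ C).toReal)⁻¹ • ∫ t in C, t ∂μ₀)
    (hαpool : αpool = ∫ t, t ∂μ₀)
    (Trμ TrC : ℝ)
    (hTrμ : Trμ = ∫ t, ‖t - αpool‖ ^ 2 ∂μ₀)
    (hTrC : TrC = ((μ₀ C).toReal)⁻¹ * ∫ t in C, ‖t - αC‖ ^ 2 ∂μ₀)
    (β : EuclideanSpace ℝ (Fin L))
    (hβ : β = (1 - κ) • αC + κ • αpool) :
    ((μ₀ C).toReal)⁻¹ * (∫ t in C, ‖t - β‖ ^ 2 ∂μ₀) ≤ ∫ t, ‖t - β‖ ^ 2 ∂μ₀ ↔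
      (2 * κ - 1) * ‖αC - αpool‖ ^ 2 ≤ Trμ - TrC := by
  have : IsProbabilityMeasure μ₀[|C] := cond_isProbabilityMeasure hC.ne'
  have hL2C : Integrable (fun t => ‖t‖ ^ 2) μ₀[|C] :=
    hL2.restrict.smul_measure (ENNReal.inv_ne_top.2 hC.ne')
  have hαC_cond : αC = ∫ t, t ∂μ₀[|C] := by
    rw [integral_cond_eq_inv_smul_setIntegral, hαC]
  have hTrC_cond : TrC = ∫ t, ‖t - αC‖ ^ 2 ∂μ₀[|C] := by
    rw [integral_cond_eq_inv_smul_setIntegral, hTrC, smul_eq_mul]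
  have hβ_line : β = AffineMap.lineMap αC αpool κ := by
    rw [hβ, AffineMap.lineMap_apply_module]
  have hdist_C : ‖αC - β‖ ^ 2 = κ ^ 2 * ‖αC - αpool‖ ^ 2 := by
    rw [← dist_eq_norm, ← dist_eq_norm, hβ_line, dist_left_lineMap, mul_pow, Real.norm_eq_abs,
      sq_abs]
  have hdist_pool : ‖αpool - β‖ ^ 2 = (1 - κ) ^ 2 * ‖αC - αpool‖ ^ 2 := by
    rw [← dist_eq_norm, ← dist_eq_norm, hβ_line, dist_right_lineMap, mul_pow, Real.norm_eq_abs,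
      sq_abs]
  rw [← smul_eq_mul, ← integral_cond_eq_inv_smul_setIntegral,
    integral_norm_sub_sq_eq_integral_norm_sub_integral_sq_add_sq hL2C,
    integral_norm_sub_sq_eq_integral_norm_sub_integral_sq_add_sq hL2, ← hαC_cond, ← hαpool,
    ← hTrC_cond, ← hTrμ, hdist_C, hdist_pool]
  constructor <;> intro h <;> linear_combination h

/-- For `β_κ = (1−κ)·αC + κ·αpool`, the inequality
`E_{μ₀,C}[‖t−β_κ‖²] ≤ ∫ ‖t−β_κ‖² dμ₀` holds iff
`(2κ − 1)·‖αC − αpool‖² ≤ Tr_{μ₀} − Tr_{μ₀,C}`. -/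
theorem regularity_criterion_iff
    {L : ℕ} (μ₀ : Measure (EuclideanSpace ℝ (Fin L)))
    [IsProbabilityMeasure μ₀]
    (hL2 : Integrable (fun t => ‖t‖ ^ 2) μ₀)
    (C : Set (EuclideanSpace ℝ (Fin L))) (hCmeas : MeasurableSet C)
    (hC : 0 < μ₀ C)
    (κ : ℝ)
    (αC αpool : EuclideanSpace ℝ (Fin L))
    (hαC : αC = ((μ₀ C).toReal)⁻¹ • ∫ t in C, t ∂μ₀)
    (hαpool : αpool = ∫ t, t ∂μ₀)
    (Trμ TrC : ℝ)
    (hTrμ : Trμ = ∫ t, ‖t - αpool‖ ^ 2 ∂μ₀)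
    (hTrC : TrC = ((μ₀ C).toReal)⁻¹ * ∫ t in C, ‖t - αC‖ ^ 2 ∂μ₀)
    (β : EuclideanSpace ℝ (Fin L))
    (hβ : β = (1 - κ) • αC + κ • αpool) :
    ((μ₀ C).toReal)⁻¹ * (∫ t in C, ‖t - β‖ ^ 2 ∂μ₀) ≤ ∫ t, ‖t - β‖ ^ 2 ∂μ₀ ↔
      (2 * κ - 1) * ‖αC - αpool‖ ^ 2 ≤ Trμ - TrC :=
  regularity_criterion_iff_general μ₀ hL2 C hC κ αC αpool hαC hαpool Trμ TrC hTrμ hTrC β hβ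
end

section
/- There exists a message w ∈ W with μ₀(C(w)) > 0 such that ‖α_{C(w)} − α_pool‖² ≤ Tr_{μ₀} − Tr_{μ₀,C(w)}. (In particular, a regular word always exists, since (2κ − 1) ≤ 1 for every κ ∈ [0,1].) -/
/-!
Law of total variance: applying the Huygens–Steiner identity on each cell and summing over the
tessellation gives `Tr_{μ₀} = ∑_w μ₀(C w) (Tr_{μ₀,C w} + ‖α_{C w} - α_pool‖²)`. The weights
`μ₀(C w)` sum to `1`, so the bracket cannot exceed `Tr_{μ₀}` on every cell of positive mass.
-/

open MeasureTheory

lemma Finset.exists_pos_and_le_of_sum_mul_le {ι : Type*} [Fintype ι] {p x : ι → ℝ} {T : ℝ}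
    (hp : ∀ i, 0 ≤ p i) (hp1 : ∑ i, p i = 1) (h : ∑ i, p i * x i ≤ T) :
    ∃ i, 0 < p i ∧ x i ≤ T := by
  by_contra! hgt
  obtain ⟨j, hj⟩ : ∃ j, 0 < p j := by
    by_contra! hle
    linarith [Finset.sum_nonpos fun i (_ : i ∈ Finset.univ) => hle i]
  have hlt : ∑ i, p i * T < ∑ i, p i * x i := by
    refine Finset.sum_lt_sum (fun i _ => ?_) ⟨j, Finset.mem_univ j, by gcongr; exact hgt j hj⟩
    rcases (hp i).eq_or_lt with h0 | hpos
    · simp [← h0]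
    · exact mul_le_mul_of_nonneg_left (hgt i hpos).le hpos.le
  rw [← Finset.sum_mul, hp1, one_mul] at hlt
  linarith

theorem integrable_norm_sub_sq_s6 {E : Type*} [NormedAddCommGroup E] [MeasurableSpace E]
    {ν : Measure E} [IsFiniteMeasure ν] (hν : MemLp (fun t : E => t) 2 ν) (c : E) :
    Integrable (fun t => ‖t - c‖ ^ 2) ν :=
  (memLp_two_iff_integrable_sq_norm (hν.sub (memLp_const c)).aestronglyMeasurable).1
    (hν.sub (memLp_const c))

section Steiner

variable {E : Type*} [NormedAddCommGroup E] [InnerProductSpace ℝ E] [CompleteSpace E]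
  [MeasurableSpace E] {ν : Measure E} [IsFiniteMeasure ν]

/-- Huygens–Steiner. The mean of `ν` is given as `m` with `∫ t ∂ν = ν(univ) • m` rather than by
division, so that the identity also holds for `ν = 0`. -/
theorem integral_norm_sub_sq_eq_add_s6 (hν : MemLp (fun t : E => t) 2 ν) {m : E}
    (hm : ∫ t, t ∂ν = ν.real Set.univ • m) (c : E) :
    ∫ t, ‖t - c‖ ^ 2 ∂ν = ∫ t, ‖t - m‖ ^ 2 ∂ν + ν.real Set.univ * ‖m - c‖ ^ 2 := by
  have hint : Integrable (fun t : E => t) ν := hν.integrable one_le_two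
  have hcentered : Integrable (fun t => t - m) ν := hint.sub (integrable_const m)
  have hcross : ∫ t, inner ℝ (m - c) (t - m) ∂ν = 0 := by
    rw [integral_inner hcentered, integral_sub hint (integrable_const m), hm, integral_const,
      sub_self, inner_zero_right]
  have hexpand : ∀ t, ‖t - c‖ ^ 2 = ‖t - m‖ ^ 2 + 2 * inner ℝ (m - c) (t - m) + ‖m - c‖ ^ 2 := by
    intro t
    rw [← sub_add_sub_cancel t m c, norm_add_sq_real, real_inner_comm]
  rw [integral_congr_ae (Filter.Eventually.of_forall hexpand), integral_add _ (integrable_const _), integral_add (integrable_norm_sub_sq_s6 hν m),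
    integral_const_mul, hcross, integral_const, smul_eq_mul]
  · ring
  · exact ((innerSL ℝ (m - c)).integrable_comp hcentered).const_mul 2
  · exact (integrable_norm_sub_sq_s6 hν m).add
      (((innerSL ℝ (m - c)).integrable_comp hcentered).const_mul 2)

theorem setIntegral_norm_sub_sq_eq_mul {μ : Measure E} [IsFiniteMeasure μ]
    (hμ : MemLp (fun t : E => t) 2 μ) {s : Set E} {a : E} {T : ℝ}
    (ha : 0 < μ s → a = (μ.real s)⁻¹ • ∫ t in s, t ∂μ)
    (hT : 0 < μ s → T = (μ.real s)⁻¹ * ∫ t in s, ‖t - a‖ ^ 2 ∂μ) (c : E) :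
    ∫ t in s, ‖t - c‖ ^ 2 ∂μ = μ.real s * (T + ‖a - c‖ ^ 2) := by
  rcases (zero_le : 0 ≤ μ s).eq_or_lt with hs | hs
  · simp [Measure.restrict_eq_zero.2 hs.symm, measureReal_def, ← hs]
  have hreal : μ.real s ≠ 0 := (ENNReal.toReal_pos hs.ne' (measure_ne_top μ s)).ne'
  have hmean : ∫ t in s, t ∂μ = (μ.restrict s).real Set.univ • a := by
    rw [measureReal_restrict_apply_univ, ha hs, smul_smul, mul_inv_cancel₀ hreal, one_smul]
  rw [integral_norm_sub_sq_eq_add_s6 (hμ.restrict s) hmean, measureReal_restrict_apply_univ, hT hs,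
    mul_add, mul_inv_cancel_left₀ hreal]

end Steiner

theorem integral_eq_sum_setIntegral_of_ae_mem_iUnion {X G ι : Type*} [MeasurableSpace X]
    [NormedAddCommGroup G] [NormedSpace ℝ G] [Fintype ι] {μ : Measure X} {C : ι → Set X}
    {f : X → G} (hC : ∀ i, MeasurableSet (C i)) (hdisj : Pairwise (Function.onFun Disjoint C))
    (hcover : ∀ᵐ x ∂μ, x ∈ ⋃ i, C i) (hf : Integrable f μ) :
    ∫ x, f x ∂μ = ∑ i, ∫ x in C i, f x ∂μ := by
  rw [integral_eq_setIntegral hcover, integral_iUnion_fintype hC hdisj fun i => hf.integrableOn]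

theorem regular_word_exists_general
    {L : ℕ} (μ₀ : Measure (EuclideanSpace ℝ (Fin L)))
    [IsProbabilityMeasure μ₀]
    (hL2 : Integrable (fun t => ‖t‖ ^ 2) μ₀)
    {W : Type} [Fintype W]
    (C : W → Set (EuclideanSpace ℝ (Fin L)))
    (hCmeas : ∀ w, MeasurableSet (C w))
    (hCdisj : Pairwise (Function.onFun Disjoint C))
    (hCcover : μ₀ (⋃ w, C w) = 1)
    (αpool : EuclideanSpace ℝ (Fin L))
    (αcell : W → EuclideanSpace ℝ (Fin L))
    (hαcell : ∀ w, 0 < μ₀ (C w) →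
      αcell w = ((μ₀ (C w)).toReal)⁻¹ • ∫ t in C w, t ∂μ₀)
    (Trμ : ℝ) (hTrμ : Trμ = ∫ t, ‖t - αpool‖ ^ 2 ∂μ₀)
    (TrC : W → ℝ)
    (hTrC : ∀ w, 0 < μ₀ (C w) →
      TrC w = ((μ₀ (C w)).toReal)⁻¹ * ∫ t in C w, ‖t - αcell w‖ ^ 2 ∂μ₀) :
    ∃ w, 0 < μ₀ (C w) ∧ ‖αcell w - αpool‖ ^ 2 ≤ Trμ - TrC w := by
  have hmem : MemLp (fun t => t) 2 μ₀ :=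
    (memLp_two_iff_integrable_sq_norm aestronglyMeasurable_id).2 hL2
  have hcover : ∀ᵐ t ∂μ₀, t ∈ ⋃ w, C w :=
    mem_ae_iff.2 ((prob_compl_eq_zero_iff (MeasurableSet.iUnion hCmeas)).2 hCcover)
  have hmass : ∑ w, μ₀.real (C w) = 1 := by
    simpa using (integral_eq_sum_setIntegral_of_ae_mem_iUnion hCmeas hCdisj hcover
      (integrable_const (1 : ℝ))).symm
  have htotal : ∑ w, μ₀.real (C w) * (TrC w + ‖αcell w - αpool‖ ^ 2) = Trμ := by
    rw [hTrμ, integral_eq_sum_setIntegral_of_ae_mem_iUnion hCmeas hCdisj hcover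
      (integrable_norm_sub_sq_s6 hmem αpool)]
    exact Finset.sum_congr rfl fun w _ =>
      (setIntegral_norm_sub_sq_eq_mul hmem (hαcell w) (hTrC w) αpool).symm
  obtain ⟨w, hw, hle⟩ :=
    Finset.exists_pos_and_le_of_sum_mul_le (fun w => measureReal_nonneg) hmass htotal.le
  exact ⟨w, (ENNReal.toReal_pos_iff.1 hw).1, by linarith⟩

/-- In any measurable tessellation there exists a positive-mass word `w`
with `‖α_{C(w)} − α_pool‖² ≤ Tr_{μ₀} − Tr_{μ₀,C(w)}`; in particular a regular word
always exists. -/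
theorem regular_word_exists
    {L : ℕ} (μ₀ : Measure (EuclideanSpace ℝ (Fin L)))
    [IsProbabilityMeasure μ₀]
    (hL2 : Integrable (fun t => ‖t‖ ^ 2) μ₀)
    {W : Type} [Fintype W] [Nonempty W]
    (C : W → Set (EuclideanSpace ℝ (Fin L)))
    (hCmeas : ∀ w, MeasurableSet (C w))
    (hCdisj : Pairwise (Function.onFun Disjoint C))
    (hCcover : μ₀ (⋃ w, C w) = 1)
    (αpool : EuclideanSpace ℝ (Fin L)) (hαpool : αpool = ∫ t, t ∂μ₀)
    (αcell : W → EuclideanSpace ℝ (Fin L))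
    (hαcell : ∀ w, 0 < μ₀ (C w) →
      αcell w = ((μ₀ (C w)).toReal)⁻¹ • ∫ t in C w, t ∂μ₀)
    (Trμ : ℝ) (hTrμ : Trμ = ∫ t, ‖t - αpool‖ ^ 2 ∂μ₀)
    (TrC : W → ℝ)
    (hTrC : ∀ w, 0 < μ₀ (C w) →
      TrC w = ((μ₀ (C w)).toReal)⁻¹ * ∫ t in C w, ‖t - αcell w‖ ^ 2 ∂μ₀) :
    ∃ w, 0 < μ₀ (C w) ∧ ‖αcell w - αpool‖ ^ 2 ≤ Trμ - TrC w :=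
  regular_word_exists_general μ₀ hL2 C hCmeas hCdisj hCcover αpool αcell hαcell Trμ hTrμ TrC hTrC
end

section
/- Let E be a strictly convex real normed vector space and let ℓ : ℝ → ℝ be strictly convex and strictly increasing on [0,∞). Then for every fixed t ∈ E, the map s ↦ ℓ(‖t − s‖) is strictly convex on E. -/
/-! For `x ≠ y` with `‖t - x‖ = ‖t - y‖`, strict convexity of the space makes the norm drop strictly
on the open segment, and `ℓ` is strictly increasing. Otherwise the norm is merely convex, `ℓ` is
monotone, and strict convexity of `ℓ` at the two distinct values `‖t - x‖ ≠ ‖t - y‖` gives the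
strict inequality. -/

open Set Metric

theorem StrictConvexOn.comp_convexOn_of_lt_on_levels {E : Type*} [AddCommGroup E] [Module ℝ E]
    {s : Set E} {t : Set ℝ} {f : E → ℝ} {g : ℝ → ℝ}
    (hg : StrictConvexOn ℝ t g) (hg' : StrictMonoOn g t) (hf : ConvexOn ℝ s f)
    (hst : MapsTo f s t)
    (hlevel : ∀ ⦃x⦄, x ∈ s → ∀ ⦃y⦄, y ∈ s → x ≠ y → f x = f y →
      ∀ ⦃a b : ℝ⦄, 0 < a → 0 < b → a + b = 1 → f (a • x + b • y) < f x) :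
    StrictConvexOn ℝ s (g ∘ f) := by
  refine ⟨hf.1, fun x hx y hy hxy a b ha hb hab => ?_⟩
  have hcombo : f (a • x + b • y) ∈ t := hst (hf.1 hx hy ha.le hb.le hab)
  by_cases hfxy : f x = f y
  · calc g (f (a • x + b • y)) < g (f x) :=
          hg' hcombo (hst hx) (hlevel hx hy hxy hfxy ha hb hab)
      _ = a • g (f x) + b • g (f y) := by
          rw [← hfxy, ← add_smul, hab, one_smul]
  · calc g (f (a • x + b • y)) ≤ g (a • f x + b • f y) :=
          hg'.monotoneOn hcombo (hg.1 (hst hx) (hst hy) ha.le hb.le hab)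
            (hf.2 hx hy ha.le hb.le hab)
      _ < a • g (f x) + b • g (f y) := hg.2 (hst hx) (hst hy) hfxy ha hb hab

theorem dist_combo_lt_of_dist_eq {E : Type*} [NormedAddCommGroup E] [NormedSpace ℝ E]
    [StrictConvexSpace ℝ E] {x y z : E} {a b : ℝ} (hne : x ≠ y) (h : dist x z = dist y z)
    (ha : 0 < a) (hb : 0 < b) (hab : a + b = 1) :
    dist (a • x + b • y) z < dist x z :=
  combo_mem_ball_of_ne (mem_closedBall.2 le_rfl) (mem_closedBall.2 h.ge) hne ha hb hab

/-- In a strictly convex real normed vector space, if `ℓ` is strictly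
convex and strictly increasing on `[0,∞)`, then for every fixed `t` the map
`s ↦ ℓ(‖t − s‖)` is strictly convex on `E`. -/
theorem strictConvexOn_loss_of_norm
    {E : Type} [NormedAddCommGroup E] [NormedSpace ℝ E] [StrictConvexSpace ℝ E]
    (ℓ : ℝ → ℝ)
    (hconv : StrictConvexOn ℝ (Set.Ici (0 : ℝ)) ℓ)
    (hmono : StrictMonoOn ℓ (Set.Ici (0 : ℝ)))
    (t : E) :
    StrictConvexOn ℝ (Set.univ : Set E) (fun s => ℓ ‖t - s‖) := by
  have h := hconv.comp_convexOn_of_lt_on_levels hmono (convexOn_univ_dist t)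
    (fun _ _ => dist_nonneg) fun _ _ _ _ hxy hd _ _ ha hb hab =>
      dist_combo_lt_of_dist_eq hxy hd ha hb hab
  simpa only [Function.comp_def, dist_comm _ t, dist_eq_norm] using h
end

section
/- Fix integers m ≥ 1 and n ≥ 1 and a real q with 0 < q < m/(m+1). The Shannon-type channel ε_S with error probability q on the message space W = Fin n → Fin (m+1) is of noisy-talk-type if and only if n = 1. -/
/-- A channel `ε` on the message space `W` is of noisy-talk-type if there are
message-wise error probabilities `p : W → [0,1]` and an error distribution `G` with
`ε(w|v) = (1 − p v)·1_{v}(w) + p v · G w`. -/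
def IsNoisyTalkType {W : Type} [Fintype W] [DecidableEq W]
    (ε : W → W → ℝ) : Prop :=
  ∃ p G : W → ℝ,
    (∀ v, p v ∈ Set.Icc (0 : ℝ) 1) ∧ (∀ w, G w ∈ Set.Icc (0 : ℝ) 1) ∧
    (∑ w, G w) = 1 ∧
    ∀ v w, ε v w = (1 - p v) * (if w = v then 1 else 0) + p v * G w

/-!
Off the diagonal a noisy-talk channel is the rank-one matrix `p v · G w`, so
`ε(w|v) ε(w'|v') = ε(w'|v) ε(w|v')` for `w, w' ∉ {v, v'}`. With two coordinates and two
letters one finds such a quadruple whose left side has Hamming distances `1, 1` and whose right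
side has `2, 2`; for the Shannon channel this forces `1 - q = q / m`, i.e. `q = m / (m + 1)`.
For `n = 1` the Shannon channel is `(1 - p) δ + p · uniform` with `p = q (m + 1) / m`.
-/

open Finset
open scoped symmDiff

theorem hammingDist_ite_mem {ι α : Type*} [Fintype ι] [DecidableEq ι] [DecidableEq α]
    {x y : α} (hxy : x ≠ y) (S T : Finset ι) :
    hammingDist (fun k => if k ∈ S then y else x) (fun k => if k ∈ T then y else x)
      = #(S ∆ T) := by
  unfold hammingDist
  congr 1
  ext k
  by_cases hS : k ∈ S <;> by_cases hT : k ∈ T <;> simp [hS, hT, mem_symmDiff, hxy, hxy.symm]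

theorem hammingDist_eq_ite_of_subsingleton {ι β : Type*} [Fintype ι] [Subsingleton ι]
    [DecidableEq β] (v w : ι → β) : hammingDist v w = if w = v then 0 else 1 := by
  split_ifs with h
  · rw [h, hammingDist_self]
  · have hle : hammingDist v w ≤ 1 :=
      hammingDist_le_card_fintype.trans (Fintype.card_le_one_iff_subsingleton.mpr ‹_›)
    have hpos : 0 < hammingDist v w := hammingDist_pos.mpr (Ne.symm h)
    omega

section NoisyTalk

variable {W : Type} [Fintype W] [DecidableEq W]

theorem isNoisyTalkType_uniform [Nonempty W] {p : ℝ} (hp : p ∈ Set.Icc (0 : ℝ) 1) :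
    IsNoisyTalkType fun v w : W =>
      (1 - p) * (if w = v then 1 else 0) + p * (1 / Fintype.card W) := by
  have hcard : (1 : ℝ) ≤ Fintype.card W := by exact_mod_cast Fintype.card_pos
  refine ⟨fun _ => p, fun _ => 1 / Fintype.card W, fun _ => hp,
    fun _ => ⟨by positivity, div_le_one_of_le₀ hcard (by positivity)⟩, ?_, fun _ _ => rfl⟩
  rw [sum_const, card_univ, nsmul_eq_mul]
  field_simp

theorem IsNoisyTalkType.apply_mul_apply_comm {ε : W → W → ℝ} (h : IsNoisyTalkType ε)
    {v v' w w' : W} (hwv : w ≠ v) (hw'v : w' ≠ v) (hwv' : w ≠ v') (hw'v' : w' ≠ v') :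
    ε v w * ε v' w' = ε v w' * ε v' w := by
  obtain ⟨p, G, -, -, -, hε⟩ := h
  simp only [hε, if_neg hwv, if_neg hw'v, if_neg hwv', if_neg hw'v']
  ring

end NoisyTalk

theorem IsNoisyTalkType.mul_self_one_eq_mul_self_two {ι α : Type} [Fintype ι] [DecidableEq ι]
    [Fintype α] [DecidableEq α] {f : ℕ → ℝ}
    (h : IsNoisyTalkType fun v w : ι → α => f (hammingDist v w))
    {i j : ι} (hij : i ≠ j) {x y : α} (hxy : x ≠ y) :
    f 1 * f 1 = f 2 * f 2 := by
  set word : Finset ι → ι → α := fun S k => if k ∈ S then y else x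
  have hd : ∀ S T, hammingDist (word S) (word T) = #(S ∆ T) := hammingDist_ite_mem hxy
  have d₁ : hammingDist (word ∅) (word {j}) = 1 := by simp [hd, Finset.symmDiff_def]
  have d₂ : hammingDist (word {i}) (word {i, j}) = 1 := by
    rw [hd, card_eq_one]
    exact ⟨j, by ext k; simp [mem_symmDiff]; grind⟩
  have d₃ : hammingDist (word ∅) (word {i, j}) = 2 := by simp [hd, Finset.symmDiff_def, hij]
  have d₄ : hammingDist (word {i}) (word {j}) = 2 := by
    rw [hd, card_eq_two]
    exact ⟨i, j, hij, by ext k; simp [mem_symmDiff]; grind⟩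
  have ne_of_dist {a b : ι → α} {d : ℕ} (hab : hammingDist a b = d) (hd : d ≠ 0) : b ≠ a :=
    (hammingDist_ne_zero.mp (hab ▸ hd)).symm
  have := h.apply_mul_apply_comm (ne_of_dist d₁ one_ne_zero) (ne_of_dist d₃ two_ne_zero)
    (ne_of_dist d₄ two_ne_zero) (ne_of_dist d₂ one_ne_zero)
  simpa only [d₁, d₂, d₃, d₄] using this

noncomputable def shannonWeight (m n : ℕ) (q : ℝ) (d : ℕ) : ℝ := (1 - q) ^ (n - d) * (q / m) ^ d

theorem shannonWeight_two_lt_one {m n : ℕ} {q : ℝ} (hn : 2 ≤ n) (hq : 0 < q) (hm : 0 < m)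
    (hqm : q / m < 1 - q) :
    0 < shannonWeight m n q 2 ∧ shannonWeight m n q 2 < shannonWeight m n q 1 := by
  obtain ⟨k, rfl⟩ := Nat.exists_eq_add_of_le' hn
  have hqm₀ : 0 < q / m := by positivity
  have h1q : 0 < 1 - q := hqm₀.trans hqm
  refine ⟨by unfold shannonWeight; positivity, ?_⟩
  calc (1 - q) ^ (k + 2 - 2) * (q / m) ^ 2
      _ = (1 - q) ^ k * (q / m) * (q / m) := by rw [Nat.add_sub_cancel]; ring
      _ < (1 - q) ^ k * (q / m) * (1 - q) := by gcongr
      _ = (1 - q) ^ (k + 2 - 1) * (q / m) ^ 1 := by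
        rw [show k + 2 - 1 = k + 1 by omega]; ring

/-- For `m ≥ 1`, `n ≥ 1` and `0 < q < m/(m+1)`, the Shannon-type channel
`ε_S(w|v) = (1−q)^{n−d(v,w)}·(q/m)^{d(v,w)}` on `W = Fin n → Fin (m+1)` is of
noisy-talk-type iff `n = 1`. -/
theorem shannon_is_noisy_talk_iff
    (m n : ℕ) (hm : 1 ≤ m) (hn : 1 ≤ n) (q : ℝ)
    (hq : 0 < q) (hq' : q < (m : ℝ) / ((m : ℝ) + 1)) :
    IsNoisyTalkType (fun v w : Fin n → Fin (m + 1) =>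
      (1 - q) ^ (n - hammingDist v w) * (q / (m : ℝ)) ^ (hammingDist v w))
      ↔ n = 1 := by
  have hm₀ : (0 : ℝ) < m := by exact_mod_cast hm
  have hqm : q * (m + 1) < m := (lt_div_iff₀ (by positivity)).mp hq'
  change IsNoisyTalkType (fun v w : Fin n → Fin (m + 1) => shannonWeight m n q (hammingDist v w))
    ↔ n = 1
  constructor
  · intro h
    by_contra hn₁
    obtain ⟨hpos, hlt⟩ := shannonWeight_two_lt_one (n := n) (by omega) hq hm
      ((div_lt_iff₀ hm₀).mpr (by linarith))
    have heq := h.mul_self_one_eq_mul_self_two (i := ⟨0, by omega⟩) (j := ⟨1, by omega⟩)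
      (by simp [Fin.ext_iff]) (x := ⟨0, by omega⟩) (y := ⟨1, by omega⟩) (by simp [Fin.ext_iff])
    exact (mul_self_lt_mul_self hpos.le hlt).ne heq.symm
  · rintro rfl
    have hp : q * (m + 1) / m ∈ Set.Icc (0 : ℝ) 1 :=
      ⟨by positivity, (div_le_one hm₀).mpr hqm.le⟩
    have hcard : (Fintype.card (Fin 1 → Fin (m + 1)) : ℝ) = m + 1 := by simp
    convert isNoisyTalkType_uniform (W := Fin 1 → Fin (m + 1)) hp using 3 with v w
    rw [hammingDist_eq_ite_of_subsingleton, hcard, shannonWeight]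
    split_ifs
    · field_simp
      ring
    · field_simp
      simp
end

section
/- Fix an integer m ≥ 2 (so the alphabet has #𝒜 = m+1 ≥ 3 letters), n = 1, and a real q with 0 < q < m/(m+1). If (p, G) is any noisy-talk representation of the Shannon-type channel ε_S with error probability q on W = Fin 1 → Fin (m+1), then necessarily p(v) = q·(m+1)/m for every v ∈ W and G(w) = 1/(m+1) for every w ∈ W; i.e. the noisy-talk representation is unique. -/
/-!
For `v ≠ w` the channel equation reads `p v * G w = q / m ≠ 0`. With at least three letters,
any two words `w, w'` have a common third word `v`, so `p v * G w = p v * G w'` forces `G` to be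
constant, hence uniform; then `p v = (q / m) / G w = q (m + 1) / m`.
-/

theorem hammingDist_eq_one_of_ne {ι β : Type*} [Fintype ι] [Subsingleton ι] [DecidableEq β]
    {x y : ι → β} (hxy : x ≠ y) : hammingDist x y = 1 := by
  have hle : hammingDist x y ≤ 1 :=
    hammingDist_le_card_fintype.trans (Fintype.card_le_one_iff_subsingleton.2 ‹_›)
  have hpos : 0 < hammingDist x y := hammingDist_pos.2 hxy
  omega

theorem eq_of_forall_ne_mul_eq {α : Type*} (hα : 3 ≤ ENat.card α) {p G : α → ℝ} {c : ℝ}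
    (hc : c ≠ 0) (h : ∀ v w, w ≠ v → p v * G w = c) (w w' : α) : G w = G w' := by
  obtain ⟨v, hvw, hvw'⟩ := ENat.exists_ne_ne_of_three_le hα w w'
  have hpv : p v ≠ 0 := left_ne_zero_of_mul (h v w hvw.symm ▸ hc)
  exact mul_left_cancel₀ hpv ((h v w hvw.symm).trans (h v w' hvw'.symm).symm)

theorem eq_one_div_card_of_sum_eq_one {α : Type*} [Fintype α] {G : α → ℝ}
    (hconst : ∀ w w', G w = G w') (hsum : ∑ w, G w = 1) (w : α) :
    G w = 1 / Fintype.card α := by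
  rw [← hsum, Finset.sum_congr rfl fun w' _ => hconst w' w, Finset.sum_const, Finset.card_univ,
    nsmul_eq_mul]
  have : (Fintype.card α : ℝ) ≠ 0 := Nat.cast_ne_zero.2 (Fintype.card_pos_iff.2 ⟨w⟩).ne'
  field_simp

theorem noisy_talk_representation_unique_general
    (m : ℕ) (hm : 2 ≤ m) (q : ℝ)
    (hq : 0 < q)
    (p G : (Fin 1 → Fin (m + 1)) → ℝ)
    (hGsum : (∑ w, G w) = 1)
    (hrep : ∀ v w : Fin 1 → Fin (m + 1),
      (1 - q) ^ (1 - hammingDist v w) * (q / (m : ℝ)) ^ (hammingDist v w)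
        = (1 - p v) * (if w = v then 1 else 0) + p v * G w) :
    (∀ v, p v = q * ((m : ℝ) + 1) / (m : ℝ)) ∧
    (∀ w, G w = 1 / ((m : ℝ) + 1)) := by
  have hm0 : (m : ℝ) ≠ 0 := by positivity
  have hoffDiag : ∀ v w, w ≠ v → p v * G w = q / m := fun v w hwv => by
    have := hrep v w
    rw [hammingDist_eq_one_of_ne (Ne.symm hwv), if_neg hwv] at this
    simpa using this.symm
  have hcard : Fintype.card (Fin 1 → Fin (m + 1)) = m + 1 := by simp
  have hthree : 3 ≤ ENat.card (Fin 1 → Fin (m + 1)) := by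
    rw [ENat.card_eq_coe_fintype_card, hcard]
    exact_mod_cast Nat.succ_le_succ hm
  have hG : ∀ w, G w = 1 / ((m : ℝ) + 1) := fun w => by
    have := eq_one_div_card_of_sum_eq_one
      (eq_of_forall_ne_mul_eq hthree (by positivity) hoffDiag) hGsum w
    rwa [hcard, Nat.cast_succ] at this
  refine ⟨fun v => ?_, hG⟩
  obtain ⟨w, hwv⟩ := Fintype.exists_ne_of_one_lt_card (by omega : 1 < Fintype.card _) v
  have := hoffDiag v w hwv
  rw [hG w] at this
  field_simp at this ⊢
  linarith

/-- For an alphabet with `m+1 ≥ 3` letters, `n = 1` and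
`0 < q < m/(m+1)`, any noisy-talk representation `(p, G)` of the Shannon-type channel
is the canonical one: `p ≡ q(m+1)/m` and `G` uniform. -/
theorem noisy_talk_representation_unique
    (m : ℕ) (hm : 2 ≤ m) (q : ℝ)
    (hq : 0 < q) (hq' : q < (m : ℝ) / ((m : ℝ) + 1))
    (p G : (Fin 1 → Fin (m + 1)) → ℝ)
    (hp : ∀ v, p v ∈ Set.Icc (0 : ℝ) 1)
    (hG : ∀ w, G w ∈ Set.Icc (0 : ℝ) 1)
    (hGsum : (∑ w, G w) = 1)
    (hrep : ∀ v w : Fin 1 → Fin (m + 1),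
      (1 - q) ^ (1 - hammingDist v w) * (q / (m : ℝ)) ^ (hammingDist v w)
        = (1 - p v) * (if w = v then 1 else 0) + p v * G w) :
    (∀ v, p v = q * ((m : ℝ) + 1) / (m : ℝ)) ∧
    (∀ w, G w = 1 / ((m : ℝ) + 1)) :=
  noisy_talk_representation_unique_general m hm q hq p G hGsum hrep
end

section
/- Let the alphabet be 𝒜 = Fin 2 (so m = 1), n = 1, and let q be a real with 0 < q < 1/2. For every g with q ≤ g ≤ 1−q, the pair (p, G) defined by G(a) = g, G(b) = 1−g, p(a) = q/(1−g), p(b) = q/g (where a, b are the two one-letter words) is a noisy-talk representation of the Shannon-type channel ε_S with error probability q. In particular, since q < 1/2, ε_S admits at least two distinct noisy-talk representations. -/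
/-!
Both the channel and the representation only depend on the single letter of a word, so the
claim reduces to the binary symmetric channel on `Fin 2`. There the off-diagonal entries force
`p(a) G(b) = q = p(b) G(a)`, and since `G(a) + G(b) = 1` the diagonal entries
`1 - p(v) (1 - G(v))` are then automatically `1 - q`. Taking `g = q` and `g = 1 - q`, which
differ because `q < 1/2`, gives two distinct representations.
-/

def IsNoisyTalkRep {W : Type} [Fintype W] [DecidableEq W]
    (ε : W → W → ℝ) (p G : W → ℝ) : Prop :=
  (∀ v, p v ∈ Set.Icc (0 : ℝ) 1) ∧ (∀ w, G w ∈ Set.Icc (0 : ℝ) 1) ∧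
  (∑ w, G w) = 1 ∧
  ∀ v w, ε v w = (1 - p v) * (if w = v then 1 else 0) + p v * G w

theorem hammingDist_eq_ite_of_unique {ι : Type*} [Fintype ι] [Unique ι] {β : ι → Type*}
    [∀ i, DecidableEq (β i)] (v w : ∀ i, β i) : hammingDist v w = if v = w then 0 else 1 := by
  split_ifs with h
  · exact hammingDist_eq_zero.2 h
  · have hle := hammingDist_le_card_fintype (x := v) (y := w)
    have hpos := hammingDist_pos.2 h
    rw [Fintype.card_unique] at hle
    omega

theorem IsNoisyTalkRep.comp_equiv {W W' : Type} [Fintype W] [DecidableEq W] [Fintype W']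
    [DecidableEq W'] {ε : W' → W' → ℝ} {p G : W' → ℝ} (h : IsNoisyTalkRep ε p G) (e : W ≃ W') :
    IsNoisyTalkRep (fun v w => ε (e v) (e w)) (p ∘ e) (G ∘ e) := by
  obtain ⟨hp, hG, hsum, hε⟩ := h
  refine ⟨fun v => hp (e v), fun w => hG (e w), (e.sum_comp G).trans hsum, fun v w => ?_⟩
  simp only [hε, Function.comp_apply, e.apply_eq_iff_eq]

def binarySymmetricChannel (q : ℝ) (a b : Fin 2) : ℝ := if b = a then 1 - q else q

theorem isNoisyTalkRep_binarySymmetricChannel {q g : ℝ} (hq : 0 < q) (hqg : q ≤ g)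
    (hgq : g ≤ 1 - q) :
    IsNoisyTalkRep (binarySymmetricChannel q) (fun a => if a = 0 then q / (1 - g) else q / g)
      (fun a => if a = 0 then g else 1 - g) := by
  have hg : 0 < g := hq.trans_le hqg
  have hg' : 0 < 1 - g := by linarith
  refine ⟨?_, ?_, ?_, ?_⟩ <;>
    simp only [Fin.forall_fin_two, Fin.sum_univ_two, binarySymmetricChannel, Set.mem_Icc,
      Fin.isValue, one_ne_zero, zero_ne_one, if_true, if_false]
  · exact ⟨⟨by positivity, (div_le_one hg').2 (by linarith)⟩,
      by positivity, (div_le_one hg).2 (by linarith)⟩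
  · exact ⟨⟨hg.le, by linarith⟩, by linarith, by linarith⟩
  · ring
  · field_simp
    and_intros <;> ring

theorem shannonChannel_eq_binarySymmetricChannel (q : ℝ) (v w : Fin 1 → Fin 2) :
    (1 - q) ^ (1 - hammingDist v w) * q ^ hammingDist v w =
      binarySymmetricChannel q (v 0) (w 0) := by
  have hletter : w 0 = v 0 ↔ w = v := (Equiv.funUnique (Fin 1) (Fin 2)).apply_eq_iff_eq
  by_cases h : v = w <;>
    simp [binarySymmetricChannel, hammingDist_eq_ite_of_unique, hletter, h, eq_comm]

theorem isNoisyTalkRep_shannonChannel_single_letter {q g : ℝ} (hq : 0 < q) (hqg : q ≤ g)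
    (hgq : g ≤ 1 - q) :
    IsNoisyTalkRep
      (fun v w : Fin 1 → Fin 2 => (1 - q) ^ (1 - hammingDist v w) * q ^ (hammingDist v w))
      (fun w => if w 0 = 0 then q / (1 - g) else q / g)
      (fun w => if w 0 = 0 then g else 1 - g) := by
  simp only [shannonChannel_eq_binarySymmetricChannel]
  exact (isNoisyTalkRep_binarySymmetricChannel hq hqg hgq).comp_equiv
    (Equiv.funUnique (Fin 1) (Fin 2))

/-- For the binary alphabet (`m = 1`), `n = 1` and `0 < q < 1/2`, every
`g ∈ [q, 1−q]` gives a noisy-talk representation `G(a) = g, G(b) = 1−g,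
p(a) = q/(1−g), p(b) = q/g` of the Shannon-type channel; in particular the
Shannon-type channel admits at least two distinct noisy-talk representations. -/
theorem binary_noisy_talk_representations
    (q : ℝ) (hq0 : 0 < q) (hq1 : q < 1 / 2) :
    (∀ g : ℝ, q ≤ g → g ≤ 1 - q →
      IsNoisyTalkRep
        (fun v w : Fin 1 → Fin 2 =>
          (1 - q) ^ (1 - hammingDist v w) * q ^ (hammingDist v w))
        (fun w => if w 0 = 0 then q / (1 - g) else q / g)
        (fun w => if w 0 = 0 then g else 1 - g)) ∧
    (∃ p₁ G₁ p₂ G₂ : (Fin 1 → Fin 2) → ℝ,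
      IsNoisyTalkRep
        (fun v w : Fin 1 → Fin 2 =>
          (1 - q) ^ (1 - hammingDist v w) * q ^ (hammingDist v w)) p₁ G₁ ∧
      IsNoisyTalkRep
        (fun v w : Fin 1 → Fin 2 =>
          (1 - q) ^ (1 - hammingDist v w) * q ^ (hammingDist v w)) p₂ G₂ ∧
      (p₁ ≠ p₂ ∨ G₁ ≠ G₂)) := by
  have rep := @isNoisyTalkRep_shannonChannel_single_letter q
  refine ⟨fun g => rep hq0, _, _, _, _, rep hq0 le_rfl (by linarith),
    rep hq0 (by linarith) le_rfl, Or.inr fun hG => ?_⟩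
  have hGa := congrFun hG (fun _ => 0)
  simp only [if_true] at hGa
  linarith
end

section
/- Let a, d > 0, let b̄ ≥ 0 and 0 ≤ b ≤ b̄, let c ∈ ℝ, and set λ* = a/(a + b̄). Then for every λ₀ with 0 ≤ λ₀ < λ*, the quadratic f(λ) = c + a·d²·(1−λ)² + b·d²·λ² satisfies f(λ₀) ≥ f(λ*) + 2·d²·(a + b̄)·((λ* − λ₀)/2)². In particular, the lower bound 2·d²·(a + b̄)·((λ* − λ₀)/2)² on the gap is independent of b and c. -/
/-! Normalise by `d² ≥ 0` and drop `c`. With `b̄` in place of `b` the quadratic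
`a (1 - λ)² + b̄ λ²` has vertex `λ* = a / (a + b̄)` and curvature `a + b̄`, so its gap at `λ₀` is
exactly `(a + b̄) (λ₀ - λ*)²`. Lowering `b̄` to `b` changes the gap by `(b̄ - b) (λ*² - λ₀²) ≥ 0`,
and the stated bound is half of `(a + b̄) (λ₀ - λ*)²`. -/

section WeightedSquares

variable {a bbar L : ℝ}

theorem weighted_sq_sub_at_vertex (hL : L * (a + bbar) = a) (x : ℝ) :
    a * (1 - x) ^ 2 + bbar * x ^ 2 - (a * (1 - L) ^ 2 + bbar * L ^ 2) =
      (a + bbar) * (x - L) ^ 2 := by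
  linear_combination (2 * (x - L)) * hL

theorem mul_sq_sub_vertex_le_weighted_sq_sub (hL : L * (a + bbar) = a) {b x : ℝ}
    (hb : b ≤ bbar) (hx : 0 ≤ x) (hxL : x ≤ L) :
    (a + bbar) * (x - L) ^ 2 ≤ a * (1 - x) ^ 2 + b * x ^ 2 - (a * (1 - L) ^ 2 + b * L ^ 2) := by
  have hsq : x ^ 2 ≤ L ^ 2 := pow_le_pow_left₀ hx hxL 2
  have hshift : 0 ≤ (bbar - b) * (L ^ 2 - x ^ 2) :=
    mul_nonneg (sub_nonneg.2 hb) (sub_nonneg.2 hsq)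
  linarith [weighted_sq_sub_at_vertex hL x]

end WeightedSquares

theorem quadratic_gap_bound_general
    (a d bbar b c lam0 : ℝ)
    (ha : 0 < a)
    (hb : b ≤ bbar)
    (hlam0 : 0 ≤ lam0) (hlt : lam0 < a / (a + bbar)) :
    c + a * d ^ 2 * (1 - lam0) ^ 2 + b * d ^ 2 * lam0 ^ 2 ≥
      (c + a * d ^ 2 * (1 - a / (a + bbar)) ^ 2
        + b * d ^ 2 * (a / (a + bbar)) ^ 2)
      + 2 * d ^ 2 * (a + bbar) * ((a / (a + bbar) - lam0) / 2) ^ 2 := by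
  set L := a / (a + bbar)
  have hs : 0 < a + bbar := (div_pos_iff_of_pos_left ha).1 (hlam0.trans_lt hlt)
  have hL : L * (a + bbar) = a := div_mul_cancel₀ a hs.ne'
  have hgap := mul_le_mul_of_nonneg_left
    (mul_sq_sub_vertex_le_weighted_sq_sub hL hb hlam0 hlt.le) (sq_nonneg d)
  have hcurv : 0 ≤ d ^ 2 * ((a + bbar) * (lam0 - L) ^ 2) := by positivity
  linear_combination hgap + hcurv / 2

/-- The one-dimensional quadratic comparison: for `a, d > 0`,
`0 ≤ b ≤ b̄`, `λ* = a/(a+b̄)` and any `0 ≤ λ₀ < λ*`, the quadratic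
`f(λ) = c + a d² (1−λ)² + b d² λ²` satisfies
`f(λ₀) ≥ f(λ*) + 2 d² (a+b̄) ((λ*−λ₀)/2)²`, with a gap bound independent of `b, c`. -/
theorem quadratic_gap_bound
    (a d bbar b c lam0 : ℝ)
    (ha : 0 < a) (hd : 0 < d) (hbbar : 0 ≤ bbar)
    (hb0 : 0 ≤ b) (hb : b ≤ bbar)
    (hlam0 : 0 ≤ lam0) (hlt : lam0 < a / (a + bbar)) :
    c + a * d ^ 2 * (1 - lam0) ^ 2 + b * d ^ 2 * lam0 ^ 2 ≥
      (c + a * d ^ 2 * (1 - a / (a + bbar)) ^ 2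
        + b * d ^ 2 * (a / (a + bbar)) ^ 2)
      + 2 * d ^ 2 * (a + bbar) * ((a / (a + bbar) - lam0) / 2) ^ 2 :=
  quadratic_gap_bound_general a d bbar b c lam0 ha hb hlam0 hlt
end
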